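/- There exists d₀ > 0 such that for all integers d ≥ d₀ the following holds. Let G be an n-vertex graph in which every vertex degree lies in [(1-10^{-10})d, (1+10^{-10})d], and let T be an n-vertex tree with at least n/10 leaves. Then the number of labeled copies of T in G (i.e., subgraphs of G isomorphic to T as labeled graphs, counted as injective embeddings) is at most e^{-n/1000}·d^n. -/

import Mathlib

set_option maxHeartbeats 1000000
set_option linter.unusedSectionVars false
set_option linter.unusedVariables false

open Finset

/-- weight of a row with `r` ones: `r·exp(-(1/10)(1-1/r))`, with `wt 0 = 0`. -/
noncomputable def wt (r : ℕ) : ℝ := r * Real.exp (-(1/10) * (1 - (r:ℝ)⁻¹))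

lemma wt_nonneg (r : ℕ) : 0 ≤ wt r := by
  unfold wt; positivity

lemma wt_zero : wt 0 = 0 := by simp [wt]

lemma wt_one : wt 1 = 1 := by simp [wt]

lemma wt_pos {r : ℕ} (h : 1 ≤ r) : 0 < wt r := by
  unfold wt
  have : (0:ℝ) < r := by exact_mod_cast h
  positivity

lemma inv_wt {r : ℕ} (h : 1 ≤ r) :
    (wt r)⁻¹ = (r:ℝ)⁻¹ * Real.exp ((1/10) * (1 - (r:ℝ)⁻¹)) := by
  have hr : (0:ℝ) < r := by exact_mod_cast h
  rw [wt, mul_inv, ← Real.exp_neg]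
  ring_nf

/-- `exp c ≤ (1-c)⁻¹`-type helper: `(1-c) * exp c ≤ 1` for `c < 1`. -/
lemma one_sub_mul_exp_le {c : ℝ} : (1 - c) * Real.exp c ≤ 1 := by
  have h := Real.add_one_le_exp (-c)
  have hp := Real.exp_pos c
  have : Real.exp (-c) * Real.exp c = 1 := by
    rw [← Real.exp_add]; simp
  nlinarith

lemma wt_mono : Monotone wt := by
  apply monotone_nat_of_le_succ
  intro k
  rcases Nat.eq_zero_or_pos k with rfl | hk
  · rw [wt_zero]; exact wt_nonneg 1
  have hk' : (0:ℝ) < k := by exact_mod_cast hk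
  have hk1 : (0:ℝ) < (k:ℝ) + 1 := by linarith
  set c : ℝ := (1/10) * ((k:ℝ)⁻¹ - ((k:ℝ)+1)⁻¹) with hc
  have hcpos : 0 ≤ c := by
    have : ((k:ℝ)+1)⁻¹ ≤ (k:ℝ)⁻¹ := by
      apply inv_anti₀ hk'; linarith
    rw [hc]; nlinarith
  have hcsmall : ((k:ℝ)+1) * c ≤ 1 := by
    rw [hc]
    have h1 : (k:ℝ)⁻¹ - ((k:ℝ)+1)⁻¹ = ((k:ℝ)*((k:ℝ)+1))⁻¹ := by
      field_simp; ring
    rw [h1]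
    have h2 : ((k:ℝ)+1) * (1/10 * ((k:ℝ) * ((k:ℝ)+1))⁻¹) = 1/10 * (k:ℝ)⁻¹ := by
      field_simp
    rw [h2]
    have : (k:ℝ)⁻¹ ≤ 1 := by
      rw [inv_le_one_iff₀]; right; exact_mod_cast hk
    linarith
  have hsplit : wt k = (k:ℝ) * (Real.exp (-(1/10) * (1 - ((k:ℝ)+1)⁻¹)) * Real.exp c) := by
    unfold wt
    rw [← Real.exp_add, hc]
    ring_nf
  have goal : (k:ℝ) * Real.exp c ≤ (k:ℝ) + 1 := by
    have h2 := one_sub_mul_exp_le (c := c)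
    have hp := Real.exp_pos c
    nlinarith
  have hE := Real.exp_pos (-(1/10) * (1 - ((k:ℝ)+1)⁻¹))
  have hw1 : wt (k+1) = ((k:ℝ)+1) * Real.exp (-(1/10) * (1 - ((k:ℝ)+1)⁻¹)) := by
    unfold wt; push_cast; ring_nf
  rw [hsplit, hw1]
  calc (k:ℝ) * (Real.exp (-(1/10) * (1 - ((k:ℝ)+1)⁻¹)) * Real.exp c)
      = ((k:ℝ) * Real.exp c) * Real.exp (-(1/10) * (1 - ((k:ℝ)+1)⁻¹)) := by ring
    _ ≤ ((k:ℝ)+1) * Real.exp (-(1/10) * (1 - ((k:ℝ)+1)⁻¹)) :=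
        mul_le_mul_of_nonneg_right goal (le_of_lt hE)

lemma wt_pred_le {r : ℕ} (h : 2 ≤ r) :
    wt (r-1) ≤ Real.exp (-(9/10) * (r:ℝ)⁻¹) * wt r := by
  have hs : (2:ℝ) ≤ (r:ℝ) := by exact_mod_cast h
  set s : ℝ := (r:ℝ) with hsdef
  have hs1 : (1:ℝ) ≤ s - 1 := by linarith
  have hs0 : (0:ℝ) < s := by linarith
  have hs10 : (0:ℝ) < s - 1 := by linarith
  have hcast : ((r-1 : ℕ) : ℝ) = s - 1 := by
    rw [Nat.cast_sub (by omega)]; simp [hsdef]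
  have hwt1 : wt (r-1) = (s-1) * Real.exp (-(1/10) * (1 - (s-1)⁻¹)) := by
    unfold wt; rw [hcast]
  have hwt2 : wt r = s * Real.exp (-(1/10) * (1 - s⁻¹)) := rfl
  rw [hwt1, hwt2]
  set x : ℝ := (1/10) * ((s-1)⁻¹ - s⁻¹) + (9/10) * s⁻¹ with hx
  have hxle : x ≤ s⁻¹ := by
    have h1 : (s-1)⁻¹ ≤ 2 * s⁻¹ := by
      rw [inv_le_iff_one_le_mul₀ hs10]
      have hss : s⁻¹ * s = 1 := inv_mul_cancel₀ (ne_of_gt hs0)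
      nlinarith
    rw [hx]; nlinarith [inv_pos.mpr hs0, inv_pos.mpr hs10]
  have key : (s-1) * Real.exp x ≤ s := by
    have h2 : (s-1) * Real.exp x ≤ (s-1) * Real.exp s⁻¹ :=
      mul_le_mul_of_nonneg_left (Real.exp_le_exp.mpr hxle) (by linarith)
    have h3 : (s-1) * Real.exp s⁻¹ = s * ((1 - s⁻¹) * Real.exp s⁻¹) := by
      field_simp
    have h4 := one_sub_mul_exp_le (c := s⁻¹)
    nlinarith [Real.exp_pos s⁻¹]
  have hsplit : Real.exp (-(1/10) * (1 - (s-1)⁻¹))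
      = Real.exp (-(9/10) * s⁻¹) * Real.exp (-(1/10) * (1 - s⁻¹)) * Real.exp x := by
    rw [← Real.exp_add, ← Real.exp_add, hx]; ring_nf
  rw [hsplit]
  have hE := Real.exp_pos (-(1/10) * (1 - s⁻¹))
  have hE2 := Real.exp_pos (-(9/10) * s⁻¹)
  calc (s-1) * (Real.exp (-(9/10) * s⁻¹) * Real.exp (-(1/10) * (1 - s⁻¹)) * Real.exp x)
      = ((s-1) * Real.exp x) * (Real.exp (-(9/10) * s⁻¹) * Real.exp (-(1/10) * (1 - s⁻¹))) := by ring
    _ ≤ s * (Real.exp (-(9/10) * s⁻¹) * Real.exp (-(1/10) * (1 - s⁻¹))) := by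
        apply mul_le_mul_of_nonneg_right key (by positivity)
    _ = Real.exp (-(9/10) * s⁻¹) * (s * Real.exp (-(1/10) * (1 - s⁻¹))) := by ring

lemma qexp_le (q : ℝ) (hq : 0 ≤ q) : q * Real.exp (1/2 - (9/10)*q) ≤ 1 := by
  have h1 : (9/10)*q ≤ Real.exp ((9/10)*q - 1) := by
    have := Real.add_one_le_exp ((9/10)*q - 1); linarith
  have h2 : (3/2 : ℝ) ≤ Real.exp (1/2) := by
    have := Real.add_one_le_exp (1/2 : ℝ); linarith
  have h3 : q ≤ Real.exp ((9/10)*q - 1/2) := by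
    have hE1 := Real.exp_pos ((9/10)*q - 1)
    have hsplit : Real.exp ((9/10)*q - 1/2) = Real.exp ((9/10)*q - 1) * Real.exp (1/2) := by
      rw [← Real.exp_add]; ring_nf
    nlinarith [Real.exp_pos (1/2 : ℝ)]
  have hE := Real.exp_pos (1/2 - (9/10)*q)
  have hmul : Real.exp ((9/10)*q - 1/2) * Real.exp (1/2 - (9/10)*q) = 1 := by
    rw [← Real.exp_add]; ring_nf; exact Real.exp_zero
  nlinarith

lemma star {ι : Type} [DecidableEq ι] (C : Finset ι) (r : ι → ℕ)
    (h1 : ∀ j ∈ C, 1 ≤ r j) :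
    ∑ i ∈ C, ∏ j ∈ C.erase i, wt (r j - 1) ≤ ∏ j ∈ C, wt (r j) := by
  by_cases hcase : ∃ j0 ∈ C, r j0 = 1
  · obtain ⟨j0, hj0, hr0⟩ := hcase
    have hzero : ∀ i ∈ C, i ≠ j0 → ∏ j ∈ C.erase i, wt (r j - 1) = 0 := by
      intro i hi hne
      apply Finset.prod_eq_zero (Finset.mem_erase.mpr ⟨Ne.symm hne, hj0⟩)
      rw [hr0]; exact wt_zero
    rw [Finset.sum_eq_single_of_mem j0 hj0 hzero]
    calc ∏ j ∈ C.erase j0, wt (r j - 1)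
        ≤ ∏ j ∈ C.erase j0, wt (r j) := by
          apply Finset.prod_le_prod (fun _ _ => wt_nonneg _)
          exact fun j _ => wt_mono (Nat.sub_le _ _)
      _ = wt (r j0) * ∏ j ∈ C.erase j0, wt (r j) := by rw [hr0, wt_one, one_mul]
      _ = ∏ j ∈ C, wt (r j) := Finset.mul_prod_erase C (fun j => wt (r j)) hj0
  · push_neg at hcase
    have h2 : ∀ j ∈ C, 2 ≤ r j := by
      intro j hj
      have := h1 j hj
      have := hcase j hj
      omega
    set p : ι → ℝ := fun j => ((r j : ℝ))⁻¹ with hp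
    set q : ℝ := ∑ j ∈ C, p j with hq
    have hp_pos : ∀ j ∈ C, 0 < p j := by
      intro j hj
      have : (0:ℝ) < r j := by exact_mod_cast (h1 j hj)
      exact inv_pos.mpr this
    have hp_half : ∀ j ∈ C, p j ≤ 1/2 := by
      intro j hj
      have : (2:ℝ) ≤ r j := by exact_mod_cast h2 j hj
      rw [hp]
      have h20 : (0:ℝ) < 2 := by norm_num
      calc ((r j : ℝ))⁻¹ ≤ (2:ℝ)⁻¹ := by
            apply inv_anti₀ h20 this
        _ = 1/2 := by norm_num
    have hq_nonneg : 0 ≤ q := Finset.sum_nonneg (fun j hj => le_of_lt (hp_pos j hj))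
    have prodpos : 0 < ∏ j ∈ C, wt (r j) :=
      Finset.prod_pos (fun j hj => wt_pos (h1 j hj))
    -- step 1: bound each term
    have step1 : ∀ i ∈ C, ∏ j ∈ C.erase i, wt (r j - 1)
        ≤ Real.exp (-(9/10) * (q - p i)) * ((∏ j ∈ C, wt (r j)) * (wt (r i))⁻¹) := by
      intro i hi
      have hA : ∏ j ∈ C.erase i, wt (r j - 1)
          ≤ ∏ j ∈ C.erase i, (Real.exp (-(9/10) * p j) * wt (r j)) := by
        apply Finset.prod_le_prod (fun _ _ => wt_nonneg _)
        intro j hj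
        exact wt_pred_le (h2 j (Finset.mem_of_mem_erase hj))
      have hB : ∏ j ∈ C.erase i, (Real.exp (-(9/10) * p j) * wt (r j))
          = (∏ j ∈ C.erase i, Real.exp (-(9/10) * p j)) * ∏ j ∈ C.erase i, wt (r j) :=
        Finset.prod_mul_distrib
      have hC : ∏ j ∈ C.erase i, Real.exp (-(9/10) * p j)
          = Real.exp (∑ j ∈ C.erase i, -(9/10) * p j) := (Real.exp_sum _ _).symm
      have hD : ∑ j ∈ C.erase i, -(9/10) * p j = -(9/10) * (q - p i) := by
        rw [← Finset.mul_sum, Finset.sum_erase_eq_sub hi, hq]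
      have hE : ∏ j ∈ C.erase i, wt (r j) = (∏ j ∈ C, wt (r j)) * (wt (r i))⁻¹ := by
        rw [← Finset.mul_prod_erase C _ hi]
        field_simp [ne_of_gt (wt_pos (h1 i hi))]
      rw [hB, hC, hD, hE] at hA
      exact hA
    have step2 : ∑ i ∈ C, ∏ j ∈ C.erase i, wt (r j - 1)
        ≤ (∏ j ∈ C, wt (r j)) * ∑ i ∈ C, Real.exp (-(9/10) * (q - p i)) * (wt (r i))⁻¹ := by
      rw [Finset.mul_sum]
      apply Finset.sum_le_sum
      intro i hi
      calc ∏ j ∈ C.erase i, wt (r j - 1)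
          ≤ Real.exp (-(9/10) * (q - p i)) * ((∏ j ∈ C, wt (r j)) * (wt (r i))⁻¹) := step1 i hi
        _ = (∏ j ∈ C, wt (r j)) * (Real.exp (-(9/10) * (q - p i)) * (wt (r i))⁻¹) := by ring
    have step3 : ∑ i ∈ C, Real.exp (-(9/10) * (q - p i)) * (wt (r i))⁻¹ ≤ 1 := by
      have hterm : ∀ i ∈ C, Real.exp (-(9/10) * (q - p i)) * (wt (r i))⁻¹
          ≤ p i * Real.exp (1/2 - (9/10)*q) := by
        intro i hi
        rw [inv_wt (h1 i hi)]
        have hexp : Real.exp (-(9/10) * (q - p i)) * Real.exp ((1/10) * (1 - p i))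
            = Real.exp ((1/10) + (8/10) * p i - (9/10)*q) := by
          rw [← Real.exp_add]; ring_nf
        have : Real.exp (-(9/10) * (q - p i)) * (((r i : ℝ))⁻¹ * Real.exp ((1/10) * (1 - ((r i : ℝ))⁻¹)))
            = p i * (Real.exp (-(9/10) * (q - p i)) * Real.exp ((1/10) * (1 - p i))) := by
          rw [hp]; ring
        rw [this, hexp]
        apply mul_le_mul_of_nonneg_left _ (le_of_lt (hp_pos i hi))
        apply Real.exp_le_exp.mpr
        have := hp_half i hi
        linarith
      calc ∑ i ∈ C, Real.exp (-(9/10) * (q - p i)) * (wt (r i))⁻¹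
          ≤ ∑ i ∈ C, p i * Real.exp (1/2 - (9/10)*q) := Finset.sum_le_sum hterm
        _ = q * Real.exp (1/2 - (9/10)*q) := by rw [← Finset.sum_mul, hq]
        _ ≤ 1 := qexp_le q hq_nonneg
    calc ∑ i ∈ C, ∏ j ∈ C.erase i, wt (r j - 1)
        ≤ (∏ j ∈ C, wt (r j)) * ∑ i ∈ C, Real.exp (-(9/10) * (q - p i)) * (wt (r i))⁻¹ := step2
      _ ≤ (∏ j ∈ C, wt (r j)) * 1 := by
          apply mul_le_mul_of_nonneg_left step3 (le_of_lt prodpos)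
      _ = ∏ j ∈ C, wt (r j) := mul_one _

lemma sum_bound {ι : Type} [DecidableEq ι] [Fintype ι] (C : Finset ι) (r : ι → ℕ)
    (h1 : ∀ j ∈ C, 1 ≤ r j) :
    ∑ i ∈ C, ∏ j ∈ Finset.univ.erase i, wt (if j ∈ C then r j - 1 else r j)
      ≤ ∏ j, wt (r j) := by
  have hsplit : ∀ i ∈ C, ∏ j ∈ Finset.univ.erase i, wt (if j ∈ C then r j - 1 else r j)
      = (∏ j ∈ C.erase i, wt (r j - 1)) * ∏ j ∈ Cᶜ, wt (r j) := by
    intro i hi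
    rw [← Finset.prod_filter_mul_prod_filter_not (Finset.univ.erase i) (· ∈ C)]
    congr 1
    · rw [show (Finset.univ.erase i).filter (· ∈ C) = C.erase i by
        ext j; simp [Finset.mem_erase, Finset.mem_filter, and_comm]]
      apply Finset.prod_congr rfl
      intro j hj
      rw [if_pos (Finset.mem_of_mem_erase hj)]
    · rw [show (Finset.univ.erase i).filter (¬ · ∈ C) = Cᶜ by
        ext j
        simp only [Finset.mem_filter, Finset.mem_erase, Finset.mem_univ, Finset.mem_compl,
          and_true, true_and]
        constructor
        · tauto
        · intro hj; exact ⟨fun he => hj (he ▸ hi), hj⟩]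
      apply Finset.prod_congr rfl
      intro j hj
      rw [if_neg (Finset.mem_compl.mp hj)]
  calc ∑ i ∈ C, ∏ j ∈ Finset.univ.erase i, wt (if j ∈ C then r j - 1 else r j)
      = ∑ i ∈ C, (∏ j ∈ C.erase i, wt (r j - 1)) * ∏ j ∈ Cᶜ, wt (r j) :=
        Finset.sum_congr rfl hsplit
    _ = (∑ i ∈ C, ∏ j ∈ C.erase i, wt (r j - 1)) * ∏ j ∈ Cᶜ, wt (r j) :=
        (Finset.sum_mul _ _ _).symm
    _ ≤ (∏ j ∈ C, wt (r j)) * ∏ j ∈ Cᶜ, wt (r j) := by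
        apply mul_le_mul_of_nonneg_right (star C r h1)
        exact Finset.prod_nonneg (fun j _ => wt_nonneg _)
    _ = ∏ j, wt (r j) := Finset.prod_mul_prod_compl C _


theorem perm_bound : ∀ (N : ℕ) (ι κ : Type) [DecidableEq ι] [DecidableEq κ]
    [Fintype ι] [Fintype κ], Fintype.card ι = N → Fintype.card κ = N →
    ∀ S : ι → Finset κ,
    (Fintype.card {σ : ι → κ // Function.Bijective σ ∧ ∀ i, σ i ∈ S i} : ℝ)
      ≤ ∏ i, wt ((S i).card) := by
  intro N
  induction N with
  | zero =>
    intro ι κ _ _ _ _ hι hκ S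
    have : IsEmpty ι := Fintype.card_eq_zero_iff.mp hι
    have h1 : Fintype.card {σ : ι → κ // Function.Bijective σ ∧ ∀ i, σ i ∈ S i}
        ≤ Fintype.card (ι → κ) := Fintype.card_subtype_le _
    have h2 : Fintype.card (ι → κ) = Fintype.card κ ^ Fintype.card ι := Fintype.card_fun
    rw [hι, pow_zero] at h2
    have h3 : (Finset.univ : Finset ι) = ∅ := Finset.univ_eq_empty
    rw [h3, Finset.prod_empty]
    exact_mod_cast le_trans h1 (le_of_eq h2)
  | succ n ih =>
    intro ι κ _ _ _ _ hι hκ S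
    have hκpos : 0 < Fintype.card κ := by omega
    have : Nonempty κ := Fintype.card_pos_iff.mp hκpos
    obtain ⟨v0⟩ := this
    classical
    set C : Finset ι := Finset.univ.filter (fun i => v0 ∈ S i) with hC
    let Small : ι → Type := fun i => {σ' : {j : ι // j ≠ i} → {u : κ // u ≠ v0} //
      Function.Bijective σ' ∧ ∀ j, σ' j ∈ ((S j.1).erase v0).subtype (· ≠ v0)}
    have cardι' : ∀ i : ι, Fintype.card {j : ι // j ≠ i} = n := by
      intro i
      have h := Fintype.card_subtype_compl (fun j : ι => j = i)
      rw [Fintype.card_subtype_eq, hι] at h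
      exact h
    have cardκ' : Fintype.card {u : κ // u ≠ v0} = n := by
      have h := Fintype.card_subtype_compl (fun u : κ => u = v0)
      rw [Fintype.card_subtype_eq, hκ] at h
      exact h
    -- the injection into the sigma type
    let f : {σ : ι → κ // Function.Bijective σ ∧ ∀ i, σ i ∈ S i} →
        (Σ i : {i : ι // i ∈ C}, Small i.1) := fun a => by
      refine ⟨⟨(Equiv.ofBijective a.1 a.2.1).symm v0, ?_⟩,
        ⟨fun j => ⟨a.1 j.1, ?_⟩, ?_, ?_⟩⟩
      · rw [hC, Finset.mem_filter]
        refine ⟨Finset.mem_univ _, ?_⟩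
        have hv : a.1 ((Equiv.ofBijective a.1 a.2.1).symm v0) = v0 :=
          Equiv.ofBijective_apply_symm_apply a.1 a.2.1 v0
        have h := a.2.2 ((Equiv.ofBijective a.1 a.2.1).symm v0)
        rwa [hv] at h
      · intro hv
        have hv2 : a.1 ((Equiv.ofBijective a.1 a.2.1).symm v0) = v0 :=
          Equiv.ofBijective_apply_symm_apply a.1 a.2.1 v0
        exact j.2 (a.2.1.1 (hv.trans hv2.symm))
      · rw [Fintype.bijective_iff_injective_and_card]
        constructor
        · intro x y hxy
          have := a.2.1.1 (Subtype.ext_iff.mp hxy)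
          exact Subtype.ext this
        · rw [cardι', cardκ']
      · intro j
        rw [Finset.mem_subtype]
        refine Finset.mem_erase.mpr ⟨?_, a.2.2 j.1⟩
        intro hv
        have hv2 : a.1 ((Equiv.ofBijective a.1 a.2.1).symm v0) = v0 :=
          Equiv.ofBijective_apply_symm_apply a.1 a.2.1 v0
        exact j.2 (a.2.1.1 (hv.trans hv2.symm))
    -- a left inverse of f, to establish injectivity
    let recover : (Σ i : {i : ι // i ∈ C}, Small i.1) → (ι → κ) := fun b x =>
      if h : x = b.1.1 then v0 else (b.2.1 ⟨x, h⟩).1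
    have hrec : ∀ a, recover (f a) = a.1 := by
      intro a
      funext x
      show (if h : x = (Equiv.ofBijective a.1 a.2.1).symm v0 then v0
        else a.1 x) = a.1 x
      split
      · next h =>
        rw [h]
        exact (Equiv.ofBijective_apply_symm_apply a.1 a.2.1 v0).symm
      · rfl
    have hf : Function.Injective f := by
      intro a b hab
      apply Subtype.ext
      rw [← hrec a, ← hrec b, hab]
    have hcard : Fintype.card {σ : ι → κ // Function.Bijective σ ∧ ∀ i, σ i ∈ S i}
        ≤ Fintype.card (Σ i : {i : ι // i ∈ C}, Small i.1) :=
      Fintype.card_le_of_injective f hf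
    have hsigma : Fintype.card (Σ i : {i : ι // i ∈ C}, Small i.1)
        = ∑ i : {i : ι // i ∈ C}, Fintype.card (Small i.1) := Fintype.card_sigma
    have hsmall : ∀ i : ι, i ∈ C → (Fintype.card (Small i) : ℝ)
        ≤ ∏ j ∈ Finset.univ.erase i, wt (if j ∈ C then (S j).card - 1 else (S j).card) := by
      intro i hi
      have hih := ih {j : ι // j ≠ i} {u : κ // u ≠ v0} (cardι' i) cardκ'
        (fun j => ((S j.1).erase v0).subtype (· ≠ v0))
      refine le_trans hih ?_
      have hcards : ∀ j : {j : ι // j ≠ i},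
          (((S j.1).erase v0).subtype (· ≠ v0)).card
            = if j.1 ∈ C then (S j.1).card - 1 else (S j.1).card := by
        intro j
        rw [Finset.card_subtype]
        have he : ((S j.1).erase v0).filter (· ≠ v0) = (S j.1).erase v0 := by
          apply Finset.filter_true_of_mem
          intro x hx
          exact (Finset.mem_erase.mp hx).1
        rw [he]
        by_cases hj : j.1 ∈ C
        · rw [if_pos hj, Finset.card_erase_of_mem]
          rw [hC, Finset.mem_filter] at hj
          exact hj.2
        · rw [if_neg hj, Finset.erase_eq_of_notMem]
          intro hv
          exact hj (by rw [hC, Finset.mem_filter]; exact ⟨Finset.mem_univ _, hv⟩)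
      rw [show (∏ j : {j : ι // j ≠ i},
            wt ((((S j.1).erase v0).subtype (· ≠ v0)).card))
          = ∏ j : {j : ι // j ≠ i}, wt (if j.1 ∈ C then (S j.1).card - 1 else (S j.1).card) from
        Finset.prod_congr rfl (fun j _ => by rw [hcards j])]
      rw [← Finset.prod_subtype (Finset.univ.erase i)
        (fun j => by simp [Finset.mem_erase])
        (fun j => wt (if j ∈ C then (S j).card - 1 else (S j).card))]
    have hfinal : (Fintype.card {σ : ι → κ // Function.Bijective σ ∧ ∀ i, σ i ∈ S i} : ℝ)
        ≤ ∑ i ∈ C, ∏ j ∈ Finset.univ.erase i, wt (if j ∈ C then (S j).card - 1 else (S j).card) := by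
      calc (Fintype.card {σ : ι → κ // Function.Bijective σ ∧ ∀ i, σ i ∈ S i} : ℝ)
          ≤ (Fintype.card (Σ i : {i : ι // i ∈ C}, Small i.1) : ℝ) := by exact_mod_cast hcard
        _ = ∑ i : {i : ι // i ∈ C}, (Fintype.card (Small i.1) : ℝ) := by
            rw [hsigma]; push_cast; rfl
        _ ≤ ∑ i : {i : ι // i ∈ C}, ∏ j ∈ Finset.univ.erase i.1,
              wt (if j ∈ C then (S j).card - 1 else (S j).card) :=
            Finset.sum_le_sum (fun i _ => hsmall i.1 i.2)
        _ = ∑ i ∈ C, ∏ j ∈ Finset.univ.erase i,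
              wt (if j ∈ C then (S j).card - 1 else (S j).card) := by
            rw [← Finset.sum_subtype C (fun i => Iff.rfl)
              (fun i => ∏ j ∈ Finset.univ.erase i, wt (if j ∈ C then (S j).card - 1 else (S j).card))]
    refine le_trans hfinal ?_
    apply sum_bound
    intro j hj
    rw [hC, Finset.mem_filter] at hj
    exact Finset.card_pos.mpr ⟨v0, hj.2⟩

section
variable {V W : Type} [Fintype V] [Fintype W] [DecidableEq V] [DecidableEq W]
variable (G : SimpleGraph V) [DecidableRel G.Adj] (T : SimpleGraph W) [DecidableRel T.Adj]

/-- counting adjacency-respecting maps on a "connected-ordered" finite set -/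
lemma hom_count (D : ℕ) (hD : ∀ v, G.degree v ≤ D) (ρ : W → ℕ) (r : W) :
    ∀ (m : ℕ) (A : Finset W), A.card = m → r ∈ A →
    (∀ a ∈ A, a ≠ r → ∃ b ∈ A, T.Adj b a ∧ ρ b < ρ a) →
    ((Finset.univ : Finset (↥A → V)).filter
      (fun ψ => ∀ a b : ↥A, T.Adj a.1 b.1 → G.Adj (ψ a) (ψ b))).card
      ≤ Fintype.card V * D ^ (m - 1) := by
  intro m
  induction m with
  | zero =>
    intro A hA hr _
    rw [Finset.card_eq_zero] at hA
    subst hA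
    simp at hr
  | succ m ih =>
    intro A hA hr hgood
    rcases Nat.eq_zero_or_pos m with rfl | hm
    · -- A is a singleton {r}
      calc ((Finset.univ : Finset (↥A → V)).filter _).card
          ≤ (Finset.univ : Finset (↥A → V)).card := Finset.card_filter_le _ _
        _ = Fintype.card (↥A → V) := rfl
        _ = Fintype.card V ^ A.card := by rw [Fintype.card_fun, Fintype.card_coe]
        _ = Fintype.card V * D ^ (1 - 1) := by rw [hA]; simp
    · -- pick a maximal non-root element
      have hne : (A.erase r).Nonempty := by
        rw [← Finset.card_pos, Finset.card_erase_of_mem hr, hA]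
        omega
      obtain ⟨a, ha, hamax⟩ := Finset.exists_max_image (A.erase r) ρ hne
      have haA : a ∈ A := Finset.mem_of_mem_erase ha
      have har : a ≠ r := (Finset.mem_erase.mp ha).1
      obtain ⟨b0, hb0A, hb0adj, hb0lt⟩ := hgood a haA har
      have hb0a : b0 ≠ a := fun h => by rw [h] at hb0lt; omega
      have hb0A' : b0 ∈ A.erase a := Finset.mem_erase.mpr ⟨hb0a, hb0A⟩
      set A' := A.erase a with hA'
      have hrA' : r ∈ A' := Finset.mem_erase.mpr ⟨Ne.symm har, hr⟩
      have hcardA' : A'.card = m := by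
        rw [hA', Finset.card_erase_of_mem haA, hA]
        omega
      have hgoodA' : ∀ c ∈ A', c ≠ r → ∃ b ∈ A', T.Adj b c ∧ ρ b < ρ c := by
        intro c hc hcr
        obtain ⟨b, hbA, hbadj, hblt⟩ := hgood c (Finset.mem_of_mem_erase hc) hcr
        refine ⟨b, Finset.mem_erase.mpr ⟨?_, hbA⟩, hbadj, hblt⟩
        intro hba
        subst hba
        have hcA : c ∈ A.erase r := Finset.mem_erase.mpr ⟨hcr, Finset.mem_of_mem_erase hc⟩
        have := hamax c hcA
        omega
      -- restriction map
      set res : (↥A → V) → (↥A' → V) :=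
        fun ψ c => ψ ⟨c.1, Finset.mem_of_mem_erase c.2⟩ with hres
      set FA := ((Finset.univ : Finset (↥A → V)).filter
        (fun ψ => ∀ c b : ↥A, T.Adj c.1 b.1 → G.Adj (ψ c) (ψ b))) with hFA
      set FA' := ((Finset.univ : Finset (↥A' → V)).filter
        (fun ψ => ∀ c b : ↥A', T.Adj c.1 b.1 → G.Adj (ψ c) (ψ b))) with hFA'
      have hmaps : ∀ ψ ∈ FA, res ψ ∈ FA' := by
        intro ψ hψ
        rw [hFA', Finset.mem_filter]
        rw [hFA, Finset.mem_filter] at hψ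
        exact ⟨Finset.mem_univ _, fun c b hcb => hψ.2 _ _ hcb⟩
      have hsum := Finset.card_eq_sum_card_fiberwise hmaps
      have hfiber : ∀ ψ' ∈ FA', (FA.filter (fun ψ => res ψ = ψ')).card ≤ D := by
        intro ψ' hψ'
        have hinj : Set.InjOn (fun ψ : ↥A → V => ψ ⟨a, haA⟩) ↑(FA.filter (fun ψ => res ψ = ψ')) := by
          intro ψ hψ τ hτ hψτ
          simp only [Finset.coe_filter, Set.mem_setOf_eq] at hψ hτ
          funext c
          by_cases hc : c.1 = a
          · have : c = (⟨a, haA⟩ : ↥A) := Subtype.ext hc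
            rw [this]; exact hψτ
          · have hcA' : c.1 ∈ A' := Finset.mem_erase.mpr ⟨hc, c.2⟩
            have h1 : ψ c = ψ' ⟨c.1, hcA'⟩ := by
              rw [← hψ.2]
            have h2 : τ c = ψ' ⟨c.1, hcA'⟩ := by
              rw [← hτ.2]
            rw [h1, h2]
        have hmapsto : ∀ ψ ∈ FA.filter (fun ψ => res ψ = ψ'),
            ψ ⟨a, haA⟩ ∈ G.neighborFinset (ψ' ⟨b0, hb0A'⟩) := by
          intro ψ hψ
          rw [Finset.mem_filter] at hψ
          obtain ⟨hψF, hψres⟩ := hψ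
          rw [hFA, Finset.mem_filter] at hψF
          have hadj := hψF.2 ⟨b0, hb0A⟩ ⟨a, haA⟩ hb0adj
          rw [SimpleGraph.mem_neighborFinset]
          have : ψ' ⟨b0, hb0A'⟩ = ψ ⟨b0, hb0A⟩ := by rw [← hψres]
          rw [this]
          exact hadj
        calc (FA.filter (fun ψ => res ψ = ψ')).card
            ≤ (G.neighborFinset (ψ' ⟨b0, hb0A'⟩)).card :=
              Finset.card_le_card_of_injOn _ hmapsto hinj
          _ = G.degree (ψ' ⟨b0, hb0A'⟩) := (G.card_neighborFinset_eq_degree _)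
          _ ≤ D := hD _
      calc FA.card = ∑ ψ' ∈ FA', (FA.filter (fun ψ => res ψ = ψ')).card := hsum
        _ ≤ ∑ _ψ' ∈ FA', D := Finset.sum_le_sum hfiber
        _ = FA'.card * D := by rw [Finset.sum_const, smul_eq_mul]
        _ ≤ (Fintype.card V * D ^ (m - 1)) * D := by
            apply Nat.mul_le_mul_right
            exact ih A' hcardA' hrA' hgoodA'
        _ = Fintype.card V * (D ^ (m - 1) * D) := by ring
        _ = Fintype.card V * D ^ (m + 1 - 1) := by
            rw [← pow_succ]
            congr 2
            omega
end

section
variable {W : Type} [Fintype W] [DecidableEq W]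
variable (T : SimpleGraph W) [DecidableRel T.Adj]

/-- L2: in a connected graph, every non-root vertex has a neighbor strictly
closer to the root. -/
lemma exists_pred (hconn : T.Connected) (r : W) :
    ∀ a : W, a ≠ r → ∃ b : W, T.Adj b a ∧ T.dist r b < T.dist r a := by
  intro a ha
  obtain ⟨p, hp⟩ := (hconn r a).exists_walk_length_eq_dist
  cases hrev : p.reverse with
  | nil =>
    exfalso
    have : p.length = 0 := by
      have := congrArg SimpleGraph.Walk.length hrev
      rw [SimpleGraph.Walk.length_reverse] at this
      simpa using this
    have := SimpleGraph.Walk.eq_of_length_eq_zero this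
    exact ha this.symm
  | cons hadj q =>
    -- hadj : T.Adj a b, q : T.Walk b r
    rename_i b
    refine ⟨b, hadj.symm, ?_⟩
    have hlen : q.reverse.length = p.length - 1 := by
      have := congrArg SimpleGraph.Walk.length hrev
      rw [SimpleGraph.Walk.length_reverse, SimpleGraph.Walk.length_cons] at this
      rw [SimpleGraph.Walk.length_reverse]
      omega
    have hble := SimpleGraph.dist_le q.reverse
    have hpos : 0 < p.length := by
      rcases Nat.eq_zero_or_pos p.length with h0 | h
      · exact absurd (SimpleGraph.Walk.eq_of_length_eq_zero h0).symm ha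
      · exact h
    omega

/-- L3a: two adjacent leaves force the graph to have ≤ 2 vertices. -/
lemma two_leaves (hconn : T.Connected) {x y : W}
    (hxy : T.Adj x y) (hx : T.degree x = 1) (hy : T.degree y = 1) :
    Fintype.card W ≤ 2 := by
  have hnx : T.neighborFinset x = {y} := by
    apply Finset.eq_singleton_iff_unique_mem.mpr
    refine ⟨(SimpleGraph.mem_neighborFinset _ _ _).mpr hxy, ?_⟩
    intro z hz
    have h1 : (T.neighborFinset x).card = 1 := hx
    obtain ⟨w, hw⟩ := Finset.card_eq_one.mp h1
    rw [hw] at hz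
    have : y ∈ ({w} : Finset W) := by
      rw [← hw]; exact (SimpleGraph.mem_neighborFinset _ _ _).mpr hxy
    simp only [Finset.mem_singleton] at hz this
    rw [hz, this]
  have hny : T.neighborFinset y = {x} := by
    apply Finset.eq_singleton_iff_unique_mem.mpr
    refine ⟨(SimpleGraph.mem_neighborFinset _ _ _).mpr hxy.symm, ?_⟩
    intro z hz
    have h1 : (T.neighborFinset y).card = 1 := hy
    obtain ⟨w, hw⟩ := Finset.card_eq_one.mp h1
    rw [hw] at hz
    have : x ∈ ({w} : Finset W) := by
      rw [← hw]; exact (SimpleGraph.mem_neighborFinset _ _ _).mpr hxy.symm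
    simp only [Finset.mem_singleton] at hz this
    rw [hz, this]
  have hclosed : ∀ (u z : W) (_ : T.Walk u z), u = x ∨ u = y → z = x ∨ z = y := by
    intro u z p
    induction p with
    | nil => exact fun h => h
    | cons hadj q ih =>
      rename_i c d _
      intro hu
      apply ih
      rcases hu with rfl | rfl
      · have : d ∈ T.neighborFinset c := (SimpleGraph.mem_neighborFinset _ _ _).mpr hadj
        rw [hnx] at this
        right; exact Finset.mem_singleton.mp this
      · have : d ∈ T.neighborFinset c := (SimpleGraph.mem_neighborFinset _ _ _).mpr hadj
        rw [hny] at this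
        left; exact Finset.mem_singleton.mp this
  have hsub : (Finset.univ : Finset W) ⊆ {x, y} := by
    intro z _
    have hreach := (hconn x z).some
    have := hclosed x z hreach (Or.inl rfl)
    simp only [Finset.mem_insert, Finset.mem_singleton]
    exact this
  calc Fintype.card W = (Finset.univ : Finset W).card := rfl
    _ ≤ ({x, y} : Finset W).card := Finset.card_le_card hsub
    _ ≤ 2 := Finset.card_insert_le _ _ |>.trans (by simp)

/-- L3b: a tree on ≥ 3 vertices has an internal vertex. -/
lemma exists_internal (hT : T.IsTree) (h3 : 3 ≤ Fintype.card W) :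
    ∃ r : W, T.degree r ≠ 1 := by
  by_contra hall
  push_neg at hall
  have hsum : ∑ v, T.degree v = 2 * T.edgeFinset.card :=
    SimpleGraph.sum_degrees_eq_twice_card_edges T
  have hedge : T.edgeFinset.card + 1 = Fintype.card W := hT.card_edgeFinset
  have : ∑ v, T.degree v = Fintype.card W := by
    calc ∑ v, T.degree v = ∑ _v : W, 1 := Finset.sum_congr rfl (fun v _ => hall v)
      _ = Fintype.card W := by simp
  omega

end

lemma exp_ge_sq {x : ℝ} (hx : 0 ≤ x) : x^2/4 ≤ Real.exp x := by
  have h1 : x/2 + 1 ≤ Real.exp (x/2) := Real.add_one_le_exp (x/2)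
  have h2 : (x/2)^2 ≤ (x/2 + 1)^2 := by nlinarith
  have h3 : (x/2 + 1)^2 ≤ (Real.exp (x/2))^2 := by nlinarith [Real.exp_pos (x/2)]
  have h4 : (Real.exp (x/2))^2 = Real.exp x := by
    rw [sq, ← Real.exp_add]; ring_nf
  nlinarith

lemma wt_le_D {D : ℕ} (hD : 2 ≤ D) : wt D ≤ (D:ℝ) * Real.exp (-(1/20)) := by
  unfold wt
  apply mul_le_mul_of_nonneg_left _ (by positivity)
  apply Real.exp_le_exp.mpr
  have hD' : (2:ℝ) ≤ (D:ℝ) := by exact_mod_cast hD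
  have : ((D:ℝ))⁻¹ ≤ 1/2 := by
    rw [inv_le_comm₀ (by linarith) (by norm_num)]
    linarith
  nlinarith

/-- Claim 3.4: if `G` is an `n`-vertex almost `d`-regular graph and `T` is an
`n`-vertex tree with at least `n/10` leaves, then the number of labeled copies
(injective embeddings) of `T` in `G` is at most `e^{-n/1000}·dⁿ`. -/
theorem count_trees_many_leaves :
    ∃ d₀ : ℝ, 0 < d₀ ∧ ∀ d : ℕ, d₀ ≤ d →
      ∀ (V W : Type) [Fintype V] [Fintype W] [DecidableEq V] [DecidableEq W]
        (n : ℕ) (_ : Fintype.card V = n) (_ : Fintype.card W = n)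
        (G : SimpleGraph V) [DecidableRel G.Adj]
        (T : SimpleGraph W) [DecidableRel T.Adj] (_ : T.IsTree)
        (_ : ∀ v, (1 - (10:ℝ) ^ (-10 : ℤ)) * d ≤ (G.degree v : ℝ) ∧
              (G.degree v : ℝ) ≤ (1 + (10:ℝ) ^ (-10 : ℤ)) * d)
        (_ : n ≤ 10 * Nat.card {w : W // T.degree w = 1}),
        (Nat.card {φ : W → V // Function.Injective φ ∧
            ∀ u w, T.Adj u w → G.Adj (φ u) (φ w)} : ℝ)
          ≤ Real.exp (-(n : ℝ) / 1000) * (d : ℝ) ^ n := by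
  classical
  refine ⟨10^6, by norm_num, ?_⟩
  intro d hd V W _ _ _ _ n hV hW G _ T _ hT hdeg hleaf
  set ε : ℝ := (10:ℝ) ^ (-10 : ℤ) with hε
  clear_value ε
  have hε0 : 0 < ε := by rw [hε]; positivity
  have hε1 : ε ≤ 1/100000 := by rw [hε]; norm_num
  rcases Nat.eq_zero_or_pos n with rfl | hn
  · -- n = 0
    have hWe : IsEmpty W := Fintype.card_eq_zero_iff.mp hW
    have hsub : Subsingleton {φ : W → V // Function.Injective φ ∧
        ∀ u w, T.Adj u w → G.Adj (φ u) (φ w)} := by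
      constructor
      intro a b
      apply Subtype.ext
      funext w
      exact (hWe.false w).elim
    have h1 : Nat.card {φ : W → V // Function.Injective φ ∧
        ∀ u w, T.Adj u w → G.Adj (φ u) (φ w)} ≤ 1 := by
      rw [Nat.card_eq_fintype_card]
      exact Fintype.card_le_one_iff_subsingleton.mpr hsub
    have h2 : (Real.exp (-(0:ℕ) / 1000) * (d:ℝ) ^ (0:ℕ)) = 1 := by
      norm_num
    rw [h2]
    exact_mod_cast h1
  -- main case
  have hd6 : (10:ℝ)^6 ≤ (d:ℝ) := hd
  have hdn : (1000:ℕ) ≤ d := by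
    have h1000 : (1000:ℝ) ≤ (d:ℝ) := le_trans (by norm_num) hd6
    exact_mod_cast h1000
  have hd1 : (1:ℝ) ≤ (d:ℝ) := by
    have : ((1000:ℕ):ℝ) ≤ (d:ℝ) := by exact_mod_cast hdn
    push_cast at this; linarith
  -- a vertex of V exists: degree bound gives n large
  have hVpos : 0 < Fintype.card V := by rw [hV]; exact hn
  obtain ⟨v0⟩ := Fintype.card_pos_iff.mp hVpos
  have hdegv0 := hdeg v0
  have hdeglt : G.degree v0 < n := by
    rw [← hV]; exact G.degree_lt_card_verts v0
  have hnlarge : (900000:ℝ) ≤ (n:ℝ) := by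
    have h1 : (1 - ε) * d ≤ (G.degree v0 : ℝ) := hdegv0.1
    have h2 : (G.degree v0 : ℝ) ≤ (n:ℝ) - 1 := by
      have : (G.degree v0 : ℝ) + 1 ≤ (n:ℝ) := by exact_mod_cast hdeglt
      linarith
    have h3 : (1 - 1/1000) * 10^6 ≤ (1 - ε) * d := by
      apply mul_le_mul (by linarith) hd6 (by norm_num) (by linarith)
    nlinarith
  have hn3 : 3 ≤ n := by
    have : (3:ℝ) ≤ (n:ℝ) := by linarith
    exact_mod_cast this
  have hn3W : 3 ≤ Fintype.card W := by rw [hW]; exact hn3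
  -- the degree cap D
  set D : ℕ := ⌊(1 + ε) * d⌋₊ with hD
  have hDdeg : ∀ v, G.degree v ≤ D := by
    intro v
    apply Nat.le_floor
    exact (hdeg v).2
  have hdD : d ≤ D := by
    apply Nat.le_floor
    have : (1:ℝ) * d ≤ (1+ε) * d := by
      apply mul_le_mul_of_nonneg_right (by linarith) (by positivity)
    push_cast
    linarith
  have hD2 : 2 ≤ D := le_trans (by omega : 2 ≤ d) hdD
  have hDreal : (D:ℝ) ≤ (1+ε) * d := Nat.floor_le (by positivity)
  have hDnn : (0:ℝ) ≤ (D:ℝ) := by positivity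
  clear_value D
  -- leaves and internal vertices
  have hconn : T.Connected := hT.isConnected
  set L : Finset W := Finset.univ.filter (fun w => T.degree w = 1) with hL
  set I : Finset W := Lᶜ with hI
  set ℓ : ℕ := L.card with hℓ
  set k : ℕ := I.card with hk
  have hkl : ℓ + k = n := by
    rw [hℓ, hk, hI, Finset.card_add_card_compl, hW]
  have hleafcard : Nat.card {w : W // T.degree w = 1} = ℓ := by
    rw [Nat.card_eq_fintype_card, Fintype.card_subtype]
  have hleaf10 : n ≤ 10 * ℓ := by rw [← hleafcard]; exact hleaf
  -- the internal root
  obtain ⟨r, hrdeg⟩ := exists_internal T hT hn3W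
  have hrI : r ∈ I := by
    rw [hI, Finset.mem_compl, hL, Finset.mem_filter]
    tauto
  have hk1 : 1 ≤ k := by
    rw [hk]
    exact Finset.card_pos.mpr ⟨r, hrI⟩
  clear_value ℓ
  -- leaves are not adjacent to leaves (n ≥ 3)
  have hleafint : ∀ x y : W, T.Adj x y → T.degree y = 1 → x ∈ I := by
    intro x y hxy hy
    rw [hI, Finset.mem_compl, hL, Finset.mem_filter]
    intro hmem
    have := two_leaves T hconn hxy hmem.2 hy
    omega
  -- the internal set is "good" for hom_count
  have hgood : ∀ a ∈ I, a ≠ r → ∃ b ∈ I, T.Adj b a ∧ T.dist r b < T.dist r a := by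
    intro a haI har
    obtain ⟨b, hba, hblt⟩ := exists_pred T hconn r a har
    refine ⟨b, ?_, hba, hblt⟩
    by_cases hbI : b ∈ I
    · exact hbI
    · exfalso
      -- b is a leaf; its unique neighbor is a, contradiction with predecessor of b
      have hbL : T.degree b = 1 := by
        rw [hI, Finset.mem_compl, not_not, hL, Finset.mem_filter] at hbI
        exact hbI.2
      have hbr : b ≠ r := by
        intro hbr'
        rw [hbr'] at hbL
        exact hrdeg hbL
      obtain ⟨c, hcb, hclt⟩ := exists_pred T hconn r b hbr
      have hca : c = a := by
        have h1 : (T.neighborFinset b).card ≤ 1 := le_of_eq hbL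
        have hc : c ∈ T.neighborFinset b := by
          rw [SimpleGraph.mem_neighborFinset]; exact hcb.symm
        have ha' : a ∈ T.neighborFinset b := by
          rw [SimpleGraph.mem_neighborFinset]; exact hba
        exact Finset.card_le_one.mp h1 c hc a ha'
      rw [hca] at hclt
      omega
  -- the count of internal partial homomorphisms
  set Imaps := ((Finset.univ : Finset (↥I → V)).filter
    (fun ψ => ∀ a b : ↥I, T.Adj a.1 b.1 → G.Adj (ψ a) (ψ b))) with hImaps
  have hIcount : Imaps.card ≤ n * D ^ (k - 1) := by
    have := hom_count G T D hDdeg (T.dist r) r I.card I rfl hrI hgood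
    rw [hV] at this
    rwa [← hk] at this
  clear_value k
  -- parents of leaves
  have hpar : ∀ l : ↥L, ∃ p : ↥I, T.Adj p.1 l.1 := by
    intro l
    have hl : T.degree l.1 = 1 := (Finset.mem_filter.mp l.2).2
    have hpos' : 0 < (T.neighborFinset l.1).card := by
      rw [T.card_neighborFinset_eq_degree, hl]
      norm_num
    obtain ⟨p, hp⟩ := Finset.card_pos.mp hpos'
    rw [SimpleGraph.mem_neighborFinset] at hp
    have hadj : T.Adj p l.1 := hp.symm
    exact ⟨⟨p, hleafint p l.1 hadj hl⟩, hadj⟩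
  choose par hparadj using hpar
  -- the full count, fiberwise over restrictions to I
  set A := ((Finset.univ : Finset (W → V)).filter
    (fun φ => Function.Injective φ ∧ ∀ u w, T.Adj u w → G.Adj (φ u) (φ w))) with hA
  have hcount : Nat.card {φ : W → V // Function.Injective φ ∧
      ∀ u w, T.Adj u w → G.Adj (φ u) (φ w)} = A.card := by
    rw [Nat.card_eq_fintype_card, Fintype.card_subtype]
  set res : (W → V) → (↥I → V) := fun φ i => φ i.1 with hres
  have hmaps : ∀ φ ∈ A, res φ ∈ Imaps := by
    intro φ hφ
    rw [hA, Finset.mem_filter] at hφ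
    rw [hImaps, Finset.mem_filter]
    exact ⟨Finset.mem_univ _, fun a b hab => hφ.2.2 a.1 b.1 hab⟩
  have hsum := Finset.card_eq_sum_card_fiberwise hmaps
  -- bound each fiber by the permanent bound
  have hfiber : ∀ ψ ∈ Imaps, ((A.filter (fun φ => res φ = ψ)).card : ℝ)
      ≤ (wt D) ^ ℓ := by
    intro ψ hψ
    rcases Finset.eq_empty_or_nonempty (A.filter (fun φ => res φ = ψ)) with he | hne
    · rw [he]
      simp only [Finset.card_empty, Nat.cast_zero]
      exact pow_nonneg (wt_nonneg D) ℓ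
    obtain ⟨φ0, hφ0⟩ := hne
    rw [Finset.mem_filter] at hφ0
    obtain ⟨hφ0A, hφ0res⟩ := hφ0
    rw [hA, Finset.mem_filter] at hφ0A
    obtain ⟨-, hφ0inj, hφ0hom⟩ := hφ0A
    have hψval : ∀ i : ↥I, ψ i = φ0 i.1 := by
      intro i
      rw [← hφ0res]
    have hψinj : Function.Injective ψ := by
      intro i j hij
      rw [hψval, hψval] at hij
      exact Subtype.ext (hφ0inj hij)
    set Im : Finset V := Finset.univ.image (fun i : ↥I => ψ i) with hIm
    have hImcard : Im.card = k := by
      rw [hIm, Finset.card_image_of_injective _ hψinj, Finset.card_univ,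
        Fintype.card_coe]
      exact hk.symm
    set R : Finset V := Imᶜ with hR
    have hRcard : R.card = ℓ := by
      rw [hR, Finset.card_compl, hImcard, hV, ← hkl]
      simp
    set S : ↥L → Finset ↥R := fun l =>
      (G.neighborFinset (ψ (par l))).subtype (· ∈ R) with hS
    have hcardL : Fintype.card ↥L = ℓ := by rw [Fintype.card_coe]; exact hℓ.symm
    have hcardR : Fintype.card ↥R = ℓ := by rw [Fintype.card_coe, hRcard]
    -- inject the fiber into the bijection-counting type
    have hfacts : ∀ φf : ↥(A.filter (fun φ => res φ = ψ)),
        Function.Injective φf.1 ∧ (∀ u w, T.Adj u w → G.Adj (φf.1 u) (φf.1 w)) ∧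
          (∀ i : ↥I, ψ i = φf.1 i.1) := by
      intro φf
      obtain ⟨hφA, hφres⟩ := Finset.mem_filter.mp φf.2
      obtain ⟨-, hinj', hhom'⟩ := Finset.mem_filter.mp hφA
      exact ⟨hinj', hhom', fun i => (congrFun hφres i).symm⟩
    have hnotim : ∀ (φf : ↥(A.filter (fun φ => res φ = ψ))) (l : ↥L), φf.1 l.1 ∈ R := by
      intro φf l
      obtain ⟨hφinj, hφhom, hψval'⟩ := hfacts φf
      rw [hR, Finset.mem_compl, hIm]
      intro hmem
      rw [Finset.mem_image] at hmem
      obtain ⟨i, -, hi⟩ := hmem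
      rw [hψval' i] at hi
      have hival := hφinj hi
      have hlI : l.1 ∈ I := by rw [← hival]; exact i.2
      rw [hI, Finset.mem_compl] at hlI
      exact hlI l.2
    have hinj : ((A.filter (fun φ => res φ = ψ)).card : ℝ)
        ≤ (Fintype.card {σ : ↥L → ↥R // Function.Bijective σ ∧ ∀ i, σ i ∈ S i} : ℝ) := by
      have hbijf : ∀ φf : ↥(A.filter (fun φ => res φ = ψ)),
          Function.Bijective (fun l : ↥L => (⟨φf.1 l.1, hnotim φf l⟩ : ↥R)) := by
        intro φf
        rw [Fintype.bijective_iff_injective_and_card]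
        constructor
        · intro a b hab
          exact Subtype.ext ((hfacts φf).1 (Subtype.ext_iff.mp hab))
        · rw [hcardL, hcardR]
      have hmemS : ∀ (φf : ↥(A.filter (fun φ => res φ = ψ))) (l : ↥L),
          (⟨φf.1 l.1, hnotim φf l⟩ : ↥R) ∈ S l := by
        intro φf l
        rw [hS, Finset.mem_subtype]
        show φf.1 l.1 ∈ G.neighborFinset (ψ (par l))
        rw [SimpleGraph.mem_neighborFinset, (hfacts φf).2.2 (par l)]
        exact (hfacts φf).2.1 _ _ (hparadj l)
      have hle : (A.filter (fun φ => res φ = ψ)).card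
          ≤ Fintype.card {σ : ↥L → ↥R // Function.Bijective σ ∧ ∀ i, σ i ∈ S i} := by
        rw [← Fintype.card_coe (A.filter (fun φ => res φ = ψ))]
        refine Fintype.card_le_of_injective
          (fun φf => ⟨fun l => ⟨φf.1 l.1, hnotim φf l⟩, hbijf φf, hmemS φf⟩) ?_
        intro a b hab
        apply Subtype.ext
        funext w
        by_cases hw : w ∈ L
        · have h0 := congrFun (Subtype.ext_iff.mp hab) ⟨w, hw⟩
          exact Subtype.ext_iff.mp h0
        · have hwI : w ∈ I := by rw [hI, Finset.mem_compl]; exact hw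
          have h1 : a.1 w = ψ ⟨w, hwI⟩ := ((hfacts a).2.2 ⟨w, hwI⟩).symm
          have h2 : b.1 w = ψ ⟨w, hwI⟩ := ((hfacts b).2.2 ⟨w, hwI⟩).symm
          rw [h1, h2]
      exact_mod_cast hle
    refine le_trans hinj ?_
    refine le_trans (perm_bound ℓ ↥L ↥R hcardL hcardR S) ?_
    have hScard : ∀ l : ↥L, (S l).card ≤ D := by
      intro l
      rw [hS, Finset.card_subtype]
      calc ((G.neighborFinset (ψ (par l))).filter (· ∈ R)).card
          ≤ (G.neighborFinset (ψ (par l))).card := Finset.card_filter_le _ _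
        _ = G.degree (ψ (par l)) := G.card_neighborFinset_eq_degree _
        _ ≤ D := hDdeg _
    calc ∏ l : ↥L, wt ((S l).card) ≤ ∏ _l : ↥L, wt D :=
          Finset.prod_le_prod (fun _ _ => wt_nonneg _)
            (fun l _ => wt_mono (hScard l))
      _ = (wt D) ^ ℓ := by rw [Finset.prod_const, Finset.card_univ, hcardL]
  -- put everything together
  rw [hcount]
  have hmain : (A.card : ℝ) ≤ (n : ℝ) * (D:ℝ) ^ (k-1) * (wt D) ^ ℓ := by
    rw [hsum]
    push_cast
    calc ∑ ψ ∈ Imaps, ((A.filter (fun φ => res φ = ψ)).card : ℝ)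
        ≤ ∑ _ψ ∈ Imaps, (wt D) ^ ℓ := Finset.sum_le_sum hfiber
      _ = (Imaps.card : ℝ) * (wt D) ^ ℓ := by rw [Finset.sum_const, nsmul_eq_mul]
      _ ≤ ((n * D ^ (k-1) : ℕ) : ℝ) * (wt D) ^ ℓ := by
          apply mul_le_mul_of_nonneg_right (by exact_mod_cast hIcount)
            (pow_nonneg (wt_nonneg D) ℓ)
      _ = (n : ℝ) * (D:ℝ) ^ (k-1) * (wt D) ^ ℓ := by push_cast; ring
  refine le_trans hmain ?_
  -- numerical endgame
  have hwtD : (0:ℝ) ≤ wt D := wt_nonneg D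
  have step1 : (n : ℝ) * (D:ℝ) ^ (k-1) * (wt D) ^ ℓ
      ≤ (n : ℝ) * (D:ℝ) ^ (k-1) * ((D:ℝ) * Real.exp (-(1/20))) ^ ℓ :=
    mul_le_mul_of_nonneg_left (pow_le_pow_left₀ hwtD (wt_le_D hD2) ℓ) (by positivity)
  refine le_trans step1 ?_
  have hsplit : ((D:ℝ) * Real.exp (-(1/20))) ^ ℓ = (D:ℝ)^ℓ * Real.exp (-(ℓ:ℝ)/20) := by
    rw [mul_pow, ← Real.exp_nat_mul]
    congr 2
    ring
  have hpowD : (D:ℝ) ^ (k-1) * (D:ℝ)^ℓ = (D:ℝ)^(n-1) := by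
    rw [← pow_add]
    congr 1
    rw [← Nat.sub_add_comm hk1, Nat.add_comm k ℓ, hkl]
  have step2 : (n : ℝ) * (D:ℝ) ^ (k-1) * ((D:ℝ) * Real.exp (-(1/20))) ^ ℓ
      = (n : ℝ) * (D:ℝ)^(n-1) * Real.exp (-(ℓ:ℝ)/20) := by
    rw [hsplit, ← hpowD]; ring
  rw [step2]
  have hexpl : Real.exp (-(ℓ:ℝ)/20) ≤ Real.exp (-(n:ℝ)/200) := by
    apply Real.exp_le_exp.mpr
    have h10 : (n:ℝ) ≤ 10 * ℓ := by exact_mod_cast hleaf10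
    linarith
  have hDpow : (D:ℝ)^(n-1) ≤ (1+ε)^(n-1) * (d:ℝ)^(n-1) := by
    rw [← mul_pow]
    exact pow_le_pow_left₀ hDnn hDreal _
  have heps : (1+ε)^(n-1) ≤ Real.exp (ε * n) := by
    calc (1+ε)^(n-1) ≤ (Real.exp ε)^(n-1) := by
          apply pow_le_pow_left₀ (by linarith)
          have := Real.add_one_le_exp ε
          linarith
      _ = Real.exp (((n-1:ℕ):ℝ) * ε) := by rw [← Real.exp_nat_mul]
      _ ≤ Real.exp (ε * n) := by
          apply Real.exp_le_exp.mpr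
          have hle' : ((n-1:ℕ):ℝ) ≤ (n:ℝ) := by
            exact_mod_cast Nat.sub_le n 1
          have hn0' : (0:ℝ) ≤ ((n-1:ℕ):ℝ) := by positivity
          nlinarith [mul_le_mul_of_nonneg_left hle' (le_of_lt hε0)]
  have hnexp : (n:ℝ) ≤ Real.exp ((n:ℝ)/300) := by
    have h1 : ((n:ℝ)/300)^2/4 ≤ Real.exp ((n:ℝ)/300) := exp_ge_sq (by positivity)
    have h2 : (n:ℝ) ≤ ((n:ℝ)/300)^2/4 := by nlinarith
    linarith
  have hkey : Real.exp ((n:ℝ)/300) * Real.exp (ε * n) * Real.exp (-(n:ℝ)/200)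
      ≤ Real.exp (-(n:ℝ)/1000) * (d:ℝ) := by
    rw [← Real.exp_add, ← Real.exp_add]
    calc Real.exp ((n:ℝ)/300 + ε * n + -(n:ℝ)/200)
        ≤ Real.exp (-(n:ℝ)/1000) := by
          apply Real.exp_le_exp.mpr
          have hnn : (0:ℝ) ≤ (n:ℝ) := by positivity
          nlinarith [mul_le_mul_of_nonneg_right hε1 hnn]
      _ = Real.exp (-(n:ℝ)/1000) * 1 := (mul_one _).symm
      _ ≤ Real.exp (-(n:ℝ)/1000) * (d:ℝ) :=
          mul_le_mul_of_nonneg_left hd1 (le_of_lt (Real.exp_pos _))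
  have hfin : (n : ℝ) * (D:ℝ)^(n-1) * Real.exp (-(ℓ:ℝ)/20)
      ≤ (Real.exp ((n:ℝ)/300) * Real.exp (ε * n) * Real.exp (-(n:ℝ)/200)) * (d:ℝ)^(n-1) := by
    have hx1 : (n : ℝ) * (D:ℝ)^(n-1) ≤ Real.exp ((n:ℝ)/300) * Real.exp (ε * n) * (d:ℝ)^(n-1) := by
      calc (n : ℝ) * (D:ℝ)^(n-1)
          ≤ (n : ℝ) * ((1+ε)^(n-1) * (d:ℝ)^(n-1)) :=
            mul_le_mul_of_nonneg_left hDpow (by positivity)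
        _ ≤ Real.exp ((n:ℝ)/300) * (Real.exp (ε * n) * (d:ℝ)^(n-1)) := by
            apply mul_le_mul hnexp
              (mul_le_mul_of_nonneg_right heps (by positivity))
              (by positivity) (by positivity)
        _ = Real.exp ((n:ℝ)/300) * Real.exp (ε * n) * (d:ℝ)^(n-1) := by ring
    calc (n : ℝ) * (D:ℝ)^(n-1) * Real.exp (-(ℓ:ℝ)/20)
        ≤ (n : ℝ) * (D:ℝ)^(n-1) * Real.exp (-(n:ℝ)/200) :=
          mul_le_mul_of_nonneg_left hexpl (by positivity)
      _ ≤ (Real.exp ((n:ℝ)/300) * Real.exp (ε * n) * (d:ℝ)^(n-1)) * Real.exp (-(n:ℝ)/200) :=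
          mul_le_mul_of_nonneg_right hx1 (le_of_lt (Real.exp_pos _))
      _ = (Real.exp ((n:ℝ)/300) * Real.exp (ε * n) * Real.exp (-(n:ℝ)/200)) * (d:ℝ)^(n-1) := by
          ring
  refine le_trans hfin ?_
  calc (Real.exp ((n:ℝ)/300) * Real.exp (ε * n) * Real.exp (-(n:ℝ)/200)) * (d:ℝ)^(n-1)
      ≤ (Real.exp (-(n:ℝ)/1000) * (d:ℝ)) * (d:ℝ)^(n-1) :=
        mul_le_mul_of_nonneg_right hkey (by positivity)
    _ = Real.exp (-(n:ℝ)/1000) * ((d:ℝ) * (d:ℝ)^(n-1)) := by ring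
    _ = Real.exp (-(n:ℝ)/1000) * (d:ℝ)^n := by
        rw [← pow_succ']
        congr 2
        exact Nat.succ_pred_eq_of_pos hn
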